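/- The clairvoyant cost matrix over horizon T is dominated by the leading principal block submatrix of the clairvoyant cost matrix over horizon T+1: 𝐂_T ⪯ 𝐂_{T+1}^{[0:T, 0:T]}. (Lemma 2, right inequality.) -/

import Mathlib

open Matrix

noncomputable section

/-- Index type for stacked state / disturbance trajectories over horizon `T`:
block index in `Fin (T+1)`, coordinate in `Fin n`. -/
abbrev SIdx (n T : ℕ) := Fin (T + 1) × Fin n

/-- Index type for stacked input trajectories over horizon `T`. -/
abbrev UIdx (m T : ℕ) := Fin T × Fin m

/-- The block-downshift operator `𝐙`. -/
def Zshift (n T : ℕ) : Matrix (SIdx n T) (SIdx n T) ℝ :=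
  Matrix.of fun p q => if (p.1 : ℕ) = (q.1 : ℕ) + 1 ∧ p.2 = q.2 then (1 : ℝ) else 0

/-- `𝐀 = I_{T+1} ⊗ A`. -/
def bigA (n T : ℕ) (A : Matrix (Fin n) (Fin n) ℝ) : Matrix (SIdx n T) (SIdx n T) ℝ :=
  Matrix.of fun p q => if p.1 = q.1 then A p.2 q.2 else 0

/-- `𝐁 = col(I_T ⊗ B, 0)`. -/
def bigB (n m T : ℕ) (B : Matrix (Fin n) (Fin m) ℝ) : Matrix (SIdx n T) (UIdx m T) ℝ :=
  Matrix.of fun p q => if (p.1 : ℕ) = (q.1 : ℕ) then B p.2 q.2 else 0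

/-- `𝐐 = blkdiag(I_T ⊗ Q, 0)`. -/
def bigQ (n T : ℕ) (Q : Matrix (Fin n) (Fin n) ℝ) : Matrix (SIdx n T) (SIdx n T) ℝ :=
  Matrix.of fun p q => if p.1 = q.1 ∧ (p.1 : ℕ) < T then Q p.2 q.2 else 0

/-- `𝐑 = I_T ⊗ R`. -/
def bigR (m T : ℕ) (R : Matrix (Fin m) (Fin m) ℝ) : Matrix (UIdx m T) (UIdx m T) ℝ :=
  Matrix.of fun p q => if p.1 = q.1 then R p.2 q.2 else 0

/-- `𝐅 = (I − 𝐙𝐀)⁻¹𝐙𝐁`. -/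
def bigF (n m T : ℕ) (A : Matrix (Fin n) (Fin n) ℝ) (B : Matrix (Fin n) (Fin m) ℝ) :
    Matrix (SIdx n T) (UIdx m T) ℝ :=
  (1 - Zshift n T * bigA n T A)⁻¹ * (Zshift n T * bigB n m T B)

/-- `𝐆 = (I − 𝐙𝐀)⁻¹`. -/
def bigG (n T : ℕ) (A : Matrix (Fin n) (Fin n) ℝ) : Matrix (SIdx n T) (SIdx n T) ℝ :=
  (1 - Zshift n T * bigA n T A)⁻¹

/-- The control cost `J_T(u, δ) = xᵀ𝐐x + uᵀ𝐑u` with `x = 𝐅u + 𝐆δ`. -/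
def costJ (n m T : ℕ) (A : Matrix (Fin n) (Fin n) ℝ) (B : Matrix (Fin n) (Fin m) ℝ)
    (Q : Matrix (Fin n) (Fin n) ℝ) (R : Matrix (Fin m) (Fin m) ℝ)
    (u : UIdx m T → ℝ) (δ : SIdx n T → ℝ) : ℝ :=
  let x := bigF n m T A B *ᵥ u + bigG n T A *ᵥ δ
  x ⬝ᵥ (bigQ n T Q *ᵥ x) + u ⬝ᵥ (bigR m T R *ᵥ u)

/-- `𝐏 = 𝐑 + 𝐅ᵀ𝐐𝐅`. -/
def bigP (n m T : ℕ) (A : Matrix (Fin n) (Fin n) ℝ) (B : Matrix (Fin n) (Fin m) ℝ)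
    (Q : Matrix (Fin n) (Fin n) ℝ) (R : Matrix (Fin m) (Fin m) ℝ) :
    Matrix (UIdx m T) (UIdx m T) ℝ :=
  bigR m T R + (bigF n m T A B)ᵀ * bigQ n T Q * bigF n m T A B

/-- The clairvoyant cost matrix `𝐂_T = 𝐆ᵀ𝐐(I + 𝐅𝐑⁻¹𝐅ᵀ𝐐)⁻¹𝐆`. -/
def Cmat (n m T : ℕ) (A : Matrix (Fin n) (Fin n) ℝ) (B : Matrix (Fin n) (Fin m) ℝ)
    (Q : Matrix (Fin n) (Fin n) ℝ) (R : Matrix (Fin m) (Fin m) ℝ) :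
    Matrix (SIdx n T) (SIdx n T) ℝ :=
  (bigG n T A)ᵀ * bigQ n T Q *
    (1 + bigF n m T A B * (bigR m T R)⁻¹ * (bigF n m T A B)ᵀ * bigQ n T Q)⁻¹ * bigG n T A

/-- Assemble `δ = col(x₀, w₀, …, w_{T−1})`. -/
def assemble (n T : ℕ) (x0 : Fin n → ℝ) (w : Fin T × Fin n → ℝ) : SIdx n T → ℝ :=
  fun p => if h : (p.1 : ℕ) = 0 then x0 p.2
    else w (⟨(p.1 : ℕ) - 1, by have := p.1.isLt; omega⟩, p.2)

/-!
`𝐂_T` is the value matrix of a linear-quadratic problem: completing the square in `u` gives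
`J_T(u, δ) = δᵀ𝐂_Tδ + ‖u - u*‖²_𝐏` with `𝐏 = 𝐑 + 𝐅ᵀ𝐐𝐅 ≻ 0`, so `δᵀ𝐂_Tδ = min_u J_T(u, δ)`.
Pad `δ` with a zero block to horizon `T+1` and take an optimal input `u` there. The dynamics
are causal, so truncating `u` to its first `T` blocks reproduces the states up to time `T` and
only drops the nonnegative stage costs of the last step:
`δᵀ𝐂_Tδ ≤ J_T(trunc u, δ) ≤ J_{T+1}(u, pad δ) = (pad δ)ᵀ𝐂_{T+1}(pad δ)`, and the right-hand
side is the quadratic form of the leading block of `𝐂_{T+1}` at `δ`.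
-/

open Function
open scoped Kronecker

namespace Matrix

theorem pow_apply_eq_zero_of_lt_add {ι R : Type*} [Fintype ι] [DecidableEq ι] [Semiring R]
    {M : Matrix ι ι R} (b : ι → ℕ) (hM : ∀ i j, b i ≤ b j → M i j = 0) :
    ∀ (k : ℕ) {i j : ι}, b i < b j + k → (M ^ k) i j = 0
  | 0, i, j, h => one_apply_ne (by rintro rfl; omega)
  | k + 1, i, j, h => by
    rw [pow_succ', mul_apply]
    refine Finset.sum_eq_zero fun l _ => ?_
    by_cases hl : b i ≤ b l
    · rw [hM i l hl, zero_mul]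
    · rw [pow_apply_eq_zero_of_lt_add b hM k (by omega), mul_zero]

theorem isNilpotent_of_apply_eq_zero_of_le {ι R : Type*} [Fintype ι] [DecidableEq ι] [Semiring R]
    {M : Matrix ι ι R} (b : ι → ℕ) (hM : ∀ i j, b i ≤ b j → M i j = 0) : IsNilpotent M := by
  obtain ⟨N, hN⟩ := Finite.exists_le b
  exact ⟨N + 1, ext fun i j => pow_apply_eq_zero_of_lt_add b hM _ (by have := hN i; omega)⟩

theorem comp_mulVec_eq_submatrix_mulVec {α β α' β' R : Type*} [Fintype β] [Fintype β']
    [NonUnitalNonAssocSemiring R] {M : Matrix α β R} (e : α' → α) {f : β' → β} (hf : Injective f)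
    (hM : ∀ a b, b ∉ Set.range f → M (e a) b = 0) (x : β → R) :
    (M *ᵥ x) ∘ e = M.submatrix e f *ᵥ (x ∘ f) := by
  ext a
  exact (Fintype.sum_of_injective f hf _ _ (fun b hb => by simp [hM a b hb]) fun _ => rfl).symm

theorem dotProduct_submatrix_mulVec {ι ν R : Type*} [Fintype ι] [Fintype ν]
    [NonUnitalNonAssocSemiring R] (C : Matrix ν ν R) {e : ι → ν} (he : Injective e) (x : ι → R) :
    x ⬝ᵥ (C.submatrix e e *ᵥ x) = extend e x 0 ⬝ᵥ (C *ᵥ extend e x 0) := by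
  have hx : ∀ j ∉ Set.range e, extend e x 0 j = 0 := fun j hj => extend_apply' _ _ _ hj
  have hC : ∀ i, (C.submatrix e e *ᵥ x) i = (C *ᵥ extend e x 0) (e i) := fun i =>
    Fintype.sum_of_injective e he _ _ (fun j hj => by simp [hx j hj])
      fun j => by simp [he.extend_apply]
  exact Fintype.sum_of_injective e he _ _ (fun j hj => by simp [hx j hj])
    fun i => by simp [hC, he.extend_apply]

theorem dotProduct_diagonal_kronecker_mulVec {ι κ R : Type*} [Fintype ι] [Fintype κ]
    [DecidableEq ι] [CommSemiring R] (d : ι → R) (M : Matrix κ κ R) (x : ι × κ → R) :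
    x ⬝ᵥ ((diagonal d ⊗ₖ M) *ᵥ x) = ∑ t, d t * (curry x t ⬝ᵥ (M *ᵥ curry x t)) := by
  simp only [dotProduct, mulVec, Fintype.sum_prod_type, kroneckerMap_apply, diagonal_apply, ite_mul,
    zero_mul, Finset.sum_ite_irrel, Finset.sum_const_zero, Finset.sum_ite_eq, Finset.mem_univ,
    if_true, Finset.mul_sum, curry]
  exact Finset.sum_congr rfl fun t _ => Finset.sum_congr rfl fun i _ =>
    Finset.sum_congr rfl fun j _ => by ring

theorem mulVec_dotProduct_mulVec {ι κ ν R : Type*} [Fintype ι] [Fintype κ] [Fintype ν]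
    [CommSemiring R] (A : Matrix ι κ R) (B : Matrix ι ν R) (x : κ → R) (y : ν → R) :
    (A *ᵥ x) ⬝ᵥ (B *ᵥ y) = x ⬝ᵥ ((Aᵀ * B) *ᵥ y) := by
  rw [← mulVec_mulVec, dotProduct_transpose_mulVec, dotProduct_comm]

theorem IsSymm.dotProduct_mulVec_comm {ι R : Type*} [Fintype ι] [CommSemiring R]
    {S : Matrix ι ι R} (hS : S.IsSymm) (x y : ι → R) : x ⬝ᵥ (S *ᵥ y) = y ⬝ᵥ (S *ᵥ x) := by
  rw [← dotProduct_transpose_mulVec, hS.eq]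

end Matrix

theorem Prod.fst_eq_last_of_notMem_range_map_castSucc {k : ℕ} {α : Type*} {b : Fin (k + 1) × α}
    (hb : b ∉ Set.range (Prod.map Fin.castSucc id)) : b.1 = Fin.last k := by
  by_contra h
  obtain ⟨i, hi⟩ := Fin.exists_castSucc_eq.mpr h
  exact hb ⟨(i, b.2), by simp [hi]⟩

section LinearQuadratic

variable {ι κ ν : Type*} [Fintype ι] [Fintype κ]

def lqCost [Fintype ν] (F : Matrix ι κ ℝ) (G : Matrix ι ν ℝ) (Q : Matrix ι ι ℝ) (R : Matrix κ κ ℝ)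
    (u : κ → ℝ) (δ : ν → ℝ) : ℝ :=
  let x := F *ᵥ u + G *ᵥ δ
  x ⬝ᵥ (Q *ᵥ x) + u ⬝ᵥ (R *ᵥ u)

def lqValueMatrix [DecidableEq ι] [DecidableEq κ] (F : Matrix ι κ ℝ) (G : Matrix ι ν ℝ)
    (Q : Matrix ι ι ℝ) (R : Matrix κ κ ℝ) :
    Matrix ν ν ℝ :=
  Gᵀ * Q * (1 + F * R⁻¹ * Fᵀ * Q)⁻¹ * G

variable {F : Matrix ι κ ℝ} {G : Matrix ι ν ℝ} {Q : Matrix ι ι ℝ} {R : Matrix κ κ ℝ}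

theorem posDef_add_transpose_mul_mul (hQ : Q.PosSemidef) (hR : R.PosDef) :
    (R + Fᵀ * Q * F).PosDef :=
  hR.add_posSemidef (by simpa using hQ.conjTranspose_mul_mul_same F)

variable [DecidableEq ι] [DecidableEq κ]

theorem lqValueMatrix_eq (hQ : Q.PosSemidef) (hR : R.PosDef) :
    lqValueMatrix F G Q R =
      Gᵀ * Q * G - (Fᵀ * Q * G)ᵀ * (R + Fᵀ * Q * F)⁻¹ * (Fᵀ * Q * G) := by
  have hRR := nonsing_inv_nonsing_inv R ((isUnit_iff_isUnit_det R).mp hR.isUnit)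
  have hP := (posDef_add_transpose_mul_mul (F := F) hQ hR).isUnit
  rw [← hRR] at hP
  have hw := add_mul_mul_inv_eq_sub 1 F R⁻¹ (Fᵀ * Q) isUnit_one hR.inv.isUnit
    (by simpa [Matrix.mul_assoc] using hP)
  simp only [inv_one, Matrix.mul_one, Matrix.one_mul, hRR] at hw
  rw [lqValueMatrix, Matrix.mul_assoc (F * R⁻¹), hw]
  simp only [transpose_mul, (isHermitian_iff_isSymm.mp hQ.isHermitian).eq, transpose_transpose,
    Matrix.mul_sub, Matrix.sub_mul, Matrix.mul_assoc, Matrix.mul_one]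

theorem isHermitian_lqValueMatrix (hQ : Q.PosSemidef) (hR : R.PosDef) :
    (lqValueMatrix F G Q R).IsHermitian := by
  have hQs := isHermitian_iff_isSymm.mp hQ.isHermitian
  have hPs := isHermitian_iff_isSymm.mp (posDef_add_transpose_mul_mul (F := F) hQ hR).isHermitian
  rw [isHermitian_iff_isSymm, lqValueMatrix_eq hQ hR, IsSymm]
  simp only [transpose_sub, transpose_mul, transpose_transpose, transpose_nonsing_inv, hQs.eq,
    hPs.eq]
  simp only [Matrix.mul_assoc]

variable [Fintype ν]

theorem lqCost_eq (hQ : Q.PosSemidef) (hR : R.PosDef) (u : κ → ℝ) (δ : ν → ℝ) :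
    lqCost F G Q R u δ = δ ⬝ᵥ (lqValueMatrix F G Q R *ᵥ δ) +
      (u + (R + Fᵀ * Q * F)⁻¹ *ᵥ ((Fᵀ * Q * G) *ᵥ δ)) ⬝ᵥ
        ((R + Fᵀ * Q * F) *ᵥ (u + (R + Fᵀ * Q * F)⁻¹ *ᵥ ((Fᵀ * Q * G) *ᵥ δ))) := by
  have hQs := isHermitian_iff_isSymm.mp hQ.isHermitian
  have hPd := posDef_add_transpose_mul_mul (F := F) hQ hR
  rw [lqValueMatrix_eq hQ hR]
  set P := R + Fᵀ * Q * F with hPdef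
  set c := (Fᵀ * Q * G) *ᵥ δ with hc
  have hPc : P *ᵥ (P⁻¹ *ᵥ c) = c := by
    rw [mulVec_mulVec, mul_nonsing_inv P ((isUnit_iff_isUnit_det P).mp hPd.isUnit), one_mulVec]
  have hPu : u ⬝ᵥ (P *ᵥ u) = u ⬝ᵥ (R *ᵥ u) + u ⬝ᵥ ((Fᵀ * Q * F) *ᵥ u) := by
    rw [hPdef, add_mulVec, dotProduct_add]
  have hFF : (F *ᵥ u) ⬝ᵥ (Q *ᵥ (F *ᵥ u)) = u ⬝ᵥ ((Fᵀ * Q * F) *ᵥ u) := by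
    rw [mulVec_mulVec, mulVec_dotProduct_mulVec, ← Matrix.mul_assoc]
  have hGG : (G *ᵥ δ) ⬝ᵥ (Q *ᵥ (G *ᵥ δ)) = δ ⬝ᵥ ((Gᵀ * Q * G) *ᵥ δ) := by
    rw [mulVec_mulVec, mulVec_dotProduct_mulVec, ← Matrix.mul_assoc]
  have hFG : (F *ᵥ u) ⬝ᵥ (Q *ᵥ (G *ᵥ δ)) = u ⬝ᵥ c := by
    rw [mulVec_mulVec, mulVec_dotProduct_mulVec, ← Matrix.mul_assoc]
  have hGF : (G *ᵥ δ) ⬝ᵥ (Q *ᵥ (F *ᵥ u)) = u ⬝ᵥ c := by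
    rw [hQs.dotProduct_mulVec_comm, hFG]
  have hPP : (P⁻¹ *ᵥ c) ⬝ᵥ (P *ᵥ u) = u ⬝ᵥ c := by
    rw [(isHermitian_iff_isSymm.mp hPd.isHermitian).dotProduct_mulVec_comm, hPc]
  have hMPM : δ ⬝ᵥ (((Fᵀ * Q * G)ᵀ * P⁻¹ * (Fᵀ * Q * G)) *ᵥ δ) = c ⬝ᵥ (P⁻¹ *ᵥ c) := by
    rw [hc, ← mulVec_mulVec, Matrix.mul_assoc, mulVec_dotProduct_mulVec]
  simp only [lqCost, sub_mulVec, dotProduct_sub, hMPM, mulVec_add, dotProduct_add, add_dotProduct,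
    hPc, hFF, hGG, hFG, hGF, hPP, hPu, dotProduct_comm (P⁻¹ *ᵥ c) c]
  ring

theorem isLeast_lqCost (hQ : Q.PosSemidef) (hR : R.PosDef) (δ : ν → ℝ) :
    IsLeast (Set.range fun u => lqCost F G Q R u δ) (δ ⬝ᵥ (lqValueMatrix F G Q R *ᵥ δ)) := by
  refine ⟨⟨-((R + Fᵀ * Q * F)⁻¹ *ᵥ ((Fᵀ * Q * G) *ᵥ δ)), ?_⟩, ?_⟩
  · dsimp only
    rw [lqCost_eq hQ hR, neg_add_cancel, zero_dotProduct, add_zero]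
  · rintro _ ⟨u, rfl⟩
    dsimp only
    rw [lqCost_eq hQ hR]
    exact le_add_of_nonneg_right <| by
      simpa using (posDef_add_transpose_mul_mul hQ hR).posSemidef.dotProduct_mulVec_nonneg
        (u + (R + Fᵀ * Q * F)⁻¹ *ᵥ ((Fᵀ * Q * G) *ᵥ δ))

end LinearQuadratic

section Horizon

variable {n m T : ℕ}

theorem Zshift_mul_bigA_apply (A : Matrix (Fin n) (Fin n) ℝ) (p q : SIdx n T) :
    (Zshift n T * bigA n T A) p q = if (p.1 : ℕ) = q.1 + 1 then A p.2 q.2 else 0 := by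
  simp [Zshift, bigA, mul_apply, Fintype.sum_prod_type, ite_and]

theorem Zshift_mul_bigB_apply (B : Matrix (Fin n) (Fin m) ℝ) (p : SIdx n T) (q : UIdx m T) :
    (Zshift n T * bigB n m T B) p q = if (p.1 : ℕ) = q.1 + 1 then B p.2 q.2 else 0 := by
  have hcast : ∀ t : Fin (T + 1), (t : ℕ) = q.1 ↔ t = q.1.castSucc := by simp [Fin.ext_iff]
  simp [Zshift, bigB, mul_apply, Fintype.sum_prod_type, ite_and, hcast]

theorem bigQ_eq_kronecker (Q : Matrix (Fin n) (Fin n) ℝ) :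
    bigQ n T Q = diagonal (fun t : Fin (T + 1) => if (t : ℕ) < T then 1 else 0) ⊗ₖ Q := by
  ext p q
  by_cases h : p.1 = q.1 <;> simp [bigQ, kroneckerMap_apply, h, ite_and]

theorem bigR_eq_kronecker (R : Matrix (Fin m) (Fin m) ℝ) : bigR m T R = 1 ⊗ₖ R := by
  ext p q
  by_cases h : p.1 = q.1 <;> simp [bigR, kroneckerMap_apply, one_apply, h]

theorem posSemidef_bigQ {Q : Matrix (Fin n) (Fin n) ℝ} (hQ : Q.PosSemidef) :
    (bigQ n T Q).PosSemidef := by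
  rw [bigQ_eq_kronecker]
  exact (PosSemidef.diagonal fun t => by positivity).kronecker hQ

theorem posDef_bigR {R : Matrix (Fin m) (Fin m) ℝ} (hR : R.PosDef) : (bigR m T R).PosDef := by
  rw [bigR_eq_kronecker]
  exact PosDef.one.kronecker hR

theorem isUnit_one_sub_Zshift_mul_bigA (A : Matrix (Fin n) (Fin n) ℝ) :
    IsUnit (1 - Zshift n T * bigA n T A) :=
  (isNilpotent_of_apply_eq_zero_of_le (fun p : SIdx n T => (p.1 : ℕ)) fun p q h => by
    rw [Zshift_mul_bigA_apply, if_neg (by omega)]).isUnit_one_sub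

theorem bigF_mulVec_add_bigG_mulVec_eq_iff (A : Matrix (Fin n) (Fin n) ℝ)
    (B : Matrix (Fin n) (Fin m) ℝ) (u : UIdx m T → ℝ) (δ x : SIdx n T → ℝ) :
    bigF n m T A B *ᵥ u + bigG n T A *ᵥ δ = x ↔
      (1 - Zshift n T * bigA n T A) *ᵥ x = (Zshift n T * bigB n m T B) *ᵥ u + δ := by
  have hdet := (isUnit_iff_isUnit_det _).mp (isUnit_one_sub_Zshift_mul_bigA (T := T) A)
  rw [bigF, bigG, ← mulVec_mulVec, ← mulVec_add]
  constructor
  · rintro rfl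
    rw [mulVec_mulVec, mul_nonsing_inv _ hdet, one_mulVec]
  · intro h
    rw [← h, mulVec_mulVec, nonsing_inv_mul _ hdet, one_mulVec]

theorem bigF_mulVec_add_bigG_mulVec_comp_castSucc (A : Matrix (Fin n) (Fin n) ℝ)
    (B : Matrix (Fin n) (Fin m) ℝ) (u : UIdx m (T + 1) → ℝ) (δ : SIdx n T → ℝ) :
    (bigF n m (T + 1) A B *ᵥ u + bigG n (T + 1) A *ᵥ extend (Prod.map Fin.castSucc id) δ 0) ∘
        Prod.map Fin.castSucc id =
      bigF n m T A B *ᵥ (u ∘ Prod.map Fin.castSucc id) + bigG n T A *ᵥ δ := by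
  set e : SIdx n T → SIdx n (T + 1) := Prod.map Fin.castSucc id
  have he : Injective e := (Fin.castSucc_injective _).prodMap injective_id
  set x := bigF n m (T + 1) A B *ᵥ u + bigG n (T + 1) A *ᵥ extend e δ 0
  have hx := (bigF_mulVec_add_bigG_mulVec_eq_iff A B u (extend e δ 0) x).mp rfl
  symm
  rw [bigF_mulVec_add_bigG_mulVec_eq_iff]
  have hA : (1 - Zshift n (T + 1) * bigA n (T + 1) A).submatrix e e =
      1 - Zshift n T * bigA n T A := by
    ext p q
    simp [e, Zshift_mul_bigA_apply, one_apply, Prod.ext_iff]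
  have hB : (Zshift n (T + 1) * bigB n m (T + 1) B).submatrix e (Prod.map Fin.castSucc id) =
      Zshift n T * bigB n m T B := by
    ext p q
    simp [e, Zshift_mul_bigB_apply]
  rw [← hA, ← comp_mulVec_eq_submatrix_mulVec e he, hx, ← hB,
    ← comp_mulVec_eq_submatrix_mulVec e ((Fin.castSucc_injective _).prodMap injective_id)]
  · ext p
    simp [he.extend_apply]
  · intro p q hq
    have hp : ((e p).1 : ℕ) ≤ T := p.1.is_le
    rw [Zshift_mul_bigB_apply, Prod.fst_eq_last_of_notMem_range_map_castSucc hq, Fin.val_last,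
      if_neg (by omega)]
  · intro p q hq
    have hp : ((e p).1 : ℕ) ≤ T := p.1.is_le
    have hq := Prod.fst_eq_last_of_notMem_range_map_castSucc hq
    have hpq : e p ≠ q := by
      rintro rfl
      rw [Fin.ext_iff, Fin.val_last] at hq
      omega
    rw [Matrix.sub_apply, one_apply_ne hpq, Zshift_mul_bigA_apply, hq, Fin.val_last,
      if_neg (by omega), sub_zero]

theorem isLeast_costJ (A : Matrix (Fin n) (Fin n) ℝ) (B : Matrix (Fin n) (Fin m) ℝ)
    {Q : Matrix (Fin n) (Fin n) ℝ} {R : Matrix (Fin m) (Fin m) ℝ} (hQ : Q.PosSemidef)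
    (hR : R.PosDef) (δ : SIdx n T → ℝ) :
    IsLeast (Set.range fun u => costJ n m T A B Q R u δ) (δ ⬝ᵥ (Cmat n m T A B Q R *ᵥ δ)) :=
  isLeast_lqCost (posSemidef_bigQ hQ) (posDef_bigR hR) δ

theorem isHermitian_Cmat (A : Matrix (Fin n) (Fin n) ℝ) (B : Matrix (Fin n) (Fin m) ℝ)
    {Q : Matrix (Fin n) (Fin n) ℝ} {R : Matrix (Fin m) (Fin m) ℝ} (hQ : Q.PosSemidef)
    (hR : R.PosDef) : (Cmat n m T A B Q R).IsHermitian :=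
  isHermitian_lqValueMatrix (posSemidef_bigQ hQ) (posDef_bigR hR)

theorem dotProduct_bigQ_mulVec_comp_castSucc_le {Q : Matrix (Fin n) (Fin n) ℝ}
    (hQ : Q.PosSemidef) (x : SIdx n (T + 1) → ℝ) :
    (x ∘ Prod.map Fin.castSucc id) ⬝ᵥ (bigQ n T Q *ᵥ (x ∘ Prod.map Fin.castSucc id)) ≤
      x ⬝ᵥ (bigQ n (T + 1) Q *ᵥ x) := by
  simp only [bigQ_eq_kronecker, dotProduct_diagonal_kronecker_mulVec]
  rw [Fin.sum_univ_castSucc (n := T + 1)]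
  simp only [Fin.val_castSucc, Fin.val_last, lt_irrefl, if_false, zero_mul, add_zero, ite_mul,
    one_mul]
  refine Finset.sum_le_sum fun t _ => ?_
  rw [if_pos t.isLt]
  split_ifs
  · exact le_rfl
  · simpa using hQ.dotProduct_mulVec_nonneg _

theorem dotProduct_bigR_mulVec_comp_castSucc_le {R : Matrix (Fin m) (Fin m) ℝ}
    (hR : R.PosSemidef) (u : UIdx m (T + 1) → ℝ) :
    (u ∘ Prod.map Fin.castSucc id) ⬝ᵥ (bigR m T R *ᵥ (u ∘ Prod.map Fin.castSucc id)) ≤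
      u ⬝ᵥ (bigR m (T + 1) R *ᵥ u) := by
  simp only [bigR_eq_kronecker, ← diagonal_one, dotProduct_diagonal_kronecker_mulVec]
  rw [Fin.sum_univ_castSucc (n := T)]
  exact le_add_of_nonneg_right (by simpa using hR.dotProduct_mulVec_nonneg _)

theorem costJ_comp_castSucc_le {A : Matrix (Fin n) (Fin n) ℝ} {B : Matrix (Fin n) (Fin m) ℝ}
    {Q : Matrix (Fin n) (Fin n) ℝ} {R : Matrix (Fin m) (Fin m) ℝ} (hQ : Q.PosSemidef)
    (hR : R.PosSemidef) (u : UIdx m (T + 1) → ℝ) (δ : SIdx n T → ℝ) :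
    costJ n m T A B Q R (u ∘ Prod.map Fin.castSucc id) δ ≤
      costJ n m (T + 1) A B Q R u (extend (Prod.map Fin.castSucc id) δ 0) := by
  simp only [costJ]
  rw [← bigF_mulVec_add_bigG_mulVec_comp_castSucc]
  exact add_le_add (dotProduct_bigQ_mulVec_comp_castSucc_le hQ _)
    (dotProduct_bigR_mulVec_comp_castSucc_le hR u)

end Horizon

theorem stmt7_general (n m T : ℕ)
    (A : Matrix (Fin n) (Fin n) ℝ) (B : Matrix (Fin n) (Fin m) ℝ)
    (Q : Matrix (Fin n) (Fin n) ℝ) (R : Matrix (Fin m) (Fin m) ℝ)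
    (hQ : Q.PosSemidef) (hR : R.PosDef) :
    ((Cmat n m (T + 1) A B Q R).submatrix
        (fun p : SIdx n T => ((p.1.castSucc : Fin (T + 2)), p.2))
        (fun p : SIdx n T => ((p.1.castSucc : Fin (T + 2)), p.2)) -
      Cmat n m T A B Q R).PosSemidef := by
  set e : SIdx n T → SIdx n (T + 1) := Prod.map Fin.castSucc id
  have he : Injective e := (Fin.castSucc_injective _).prodMap injective_id
  refine .of_dotProduct_mulVec_nonneg (((isHermitian_Cmat A B hQ hR).submatrix e).sub
    (isHermitian_Cmat A B hQ hR)) fun δ => ?_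
  rw [star_trivial, sub_mulVec, dotProduct_sub, sub_nonneg]
  obtain ⟨u, hu⟩ := (isLeast_costJ A B hQ hR (extend e δ 0)).1
  calc δ ⬝ᵥ (Cmat n m T A B Q R *ᵥ δ)
      ≤ costJ n m T A B Q R (u ∘ Prod.map Fin.castSucc id) δ :=
        (isLeast_costJ A B hQ hR δ).2 ⟨_, rfl⟩
    _ ≤ costJ n m (T + 1) A B Q R u (extend e δ 0) := costJ_comp_castSucc_le hQ hR.posSemidef u δ
    _ = extend e δ 0 ⬝ᵥ (Cmat n m (T + 1) A B Q R *ᵥ extend e δ 0) := hu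
    _ = δ ⬝ᵥ ((Cmat n m (T + 1) A B Q R).submatrix e e *ᵥ δ) :=
      (dotProduct_submatrix_mulVec _ he δ).symm

/-- Lemma 2, right inequality: `𝐂_T` is dominated by the leading principal block
submatrix of `𝐂_{T+1}`, i.e. `𝐂_T ⪯ 𝐂_{T+1}^{[0:T, 0:T]}`. -/
theorem stmt7 (n m T : ℕ) (hn : 0 < n) (hm : 0 < m) (hT : 1 ≤ T)
    (A : Matrix (Fin n) (Fin n) ℝ) (B : Matrix (Fin n) (Fin m) ℝ)
    (Q : Matrix (Fin n) (Fin n) ℝ) (R : Matrix (Fin m) (Fin m) ℝ)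
    (hQ : Q.PosSemidef) (hR : R.PosDef) :
    ((Cmat n m (T + 1) A B Q R).submatrix
        (fun p : SIdx n T => ((p.1.castSucc : Fin (T + 2)), p.2))
        (fun p : SIdx n T => ((p.1.castSucc : Fin (T + 2)), p.2)) -
      Cmat n m T A B Q R).PosSemidef :=
  stmt7_general n m T A B Q R hQ hR

end
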